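/- Let ϕ : ℝ² → ℝ be smooth near 0 with ϕ₂ ≡ 0 and ϕ₃ ≡ 0 (all derivatives of ϕ of order ≤ 3 vanish at 0). If h(ϕ) ≤ 2, then h_lin(ϕ) = h(ϕ), i.e. the coordinate system is linearly adapted to ϕ. -/

import Mathlib

open MeasureTheory Filter Metric Set
open scoped Topology ENNReal NNReal RealInnerProductSpace

noncomputable section

/-! ### Newton polygon machinery in two dimensions -/

/-- the partial derivative `∂₁ f` -/
def pd1 (f : ℝ × ℝ → ℝ) : ℝ × ℝ → ℝ := fun x => fderiv ℝ f x (1, 0)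

/-- the partial derivative `∂₂ f` -/
def pd2 (f : ℝ × ℝ → ℝ) : ℝ × ℝ → ℝ := fun x => fderiv ℝ f x (0, 1)

/-- the iterated partial derivative `∂₁^{α₁} ∂₂^{α₂} f` -/
def pD (α : ℕ × ℕ) (f : ℝ × ℝ → ℝ) : ℝ × ℝ → ℝ := pd1^[α.1] (pd2^[α.2] f)

/-- the Taylor support of `f` at the origin -/
def taylorSupport (f : ℝ × ℝ → ℝ) : Set (ℕ × ℕ) := {α : ℕ × ℕ | α ≠ 0 ∧ pD α f 0 ≠ 0}

/-- the Newton polygon of `f` at the origin -/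
def newtonPolygon (f : ℝ × ℝ → ℝ) : Set (ℝ × ℝ) :=
  convexHull ℝ (⋃ α ∈ taylorSupport f, {t : ℝ × ℝ | (α.1 : ℝ) ≤ t.1 ∧ (α.2 : ℝ) ≤ t.2})

/-- the Newton distance of `f` at the origin -/
def newtonDist (f : ℝ × ℝ → ℝ) : ℝ := sInf {t : ℝ | 0 < t ∧ (t, t) ∈ newtonPolygon f}

/-- a smooth local coordinate change at the origin of `ℝ²` -/
def IsLocalCoordChange (y : ℝ × ℝ → ℝ × ℝ) : Prop :=
  y 0 = 0 ∧ ∃ U V : Set (ℝ × ℝ), IsOpen U ∧ IsOpen V ∧ (0 : ℝ × ℝ) ∈ U ∧ (0 : ℝ × ℝ) ∈ V ∧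
    ContDiffOn ℝ (⊤ : ℕ∞) y U ∧ MapsTo y U V ∧ ∃ z : ℝ × ℝ → ℝ × ℝ,
      ContDiffOn ℝ (⊤ : ℕ∞) z V ∧ MapsTo z V U ∧
      (∀ x ∈ U, z (y x) = x) ∧ (∀ x ∈ V, y (z x) = x)

/-- the height `h(f)` of `f` -/
def height (f : ℝ × ℝ → ℝ) : ℝ :=
  sSup {d : ℝ | ∃ y : ℝ × ℝ → ℝ × ℝ, IsLocalCoordChange y ∧ d = newtonDist (f ∘ y)}

/-- the linear height `h_lin(f)` of `f` -/
def linHeight (f : ℝ × ℝ → ℝ) : ℝ :=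
  sSup {d : ℝ | ∃ L : (ℝ × ℝ) ≃ₗ[ℝ] ℝ × ℝ, d = newtonDist (f ∘ L)}

/-- the degree `j` homogeneous part of the Taylor series of `f` at the origin -/
def homPart (f : ℝ × ℝ → ℝ) (j : ℕ) : ℝ × ℝ → ℝ := fun x =>
  ∑ α ∈ Finset.HasAntidiagonal.antidiagonal j,
    (pD α f 0 / ((α.1.factorial : ℝ) * (α.2.factorial : ℝ))) * x.1 ^ α.1 * x.2 ^ α.2

/-- the order of vanishing of `P` restricted to the unit circle, at the point
`(cos θ, sin θ)` -/
def circVanish (P : ℝ × ℝ → ℝ) (θ : ℝ) : ℕ∞ :=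
  sSup {k : ℕ∞ | ∀ j : ℕ, (j : ℕ∞) < k →
    iteratedDeriv j (fun t => P (Real.cos t, Real.sin t)) θ = 0}

/-- `𝔫(P)`: the maximal order of vanishing of `P` along the unit circle -/
def nmax (P : ℝ × ℝ → ℝ) : ℕ∞ := ⨆ θ : ℝ, circVanish P θ

/-! ### `D`-type singularities -/

/-- the data of a normal form of a `D_{n+1}`-type singularity (`n = ⊤` means `D_∞`):
after the linear change of variables `L`, on an `ε`-ball around the origin,
`ϕ = b(x)·(x₂ - x₁^m ω(x₁))² + b₀(x₁)` with `b(0,0) = 0`, `∂₁b(0,0) ≠ 0`, `∂₂b(0,0) = 0`,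
`ω(0) ≠ 0`, and `b₀(x₁) = x₁ⁿ β(x₁)`, `β(0) ≠ 0` (case `n < ∞`), or `b₀` flat (case `n = ⊤`). -/
def DSingData (ϕ : ℝ × ℝ → ℝ) (m : ℕ) (n : ℕ∞) (L : (ℝ × ℝ) ≃ₗ[ℝ] ℝ × ℝ)
    (b : ℝ × ℝ → ℝ) (b0 ω : ℝ → ℝ) (ε : ℝ) : Prop :=
  0 < ε ∧ ContDiffOn ℝ (⊤ : ℕ∞) b (ball 0 ε) ∧ ContDiffOn ℝ (⊤ : ℕ∞) b0 (ball 0 ε) ∧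
    ContDiffOn ℝ (⊤ : ℕ∞) ω (ball 0 ε) ∧
    (∀ x ∈ ball (0 : ℝ × ℝ) ε, ϕ (L x) = b x * (x.2 - x.1 ^ m * ω x.1) ^ 2 + b0 x.1) ∧
    b 0 = 0 ∧ pd1 b 0 ≠ 0 ∧ pd2 b 0 = 0 ∧ ω 0 ≠ 0 ∧
    ((∃ n' : ℕ, n = (n' : ℕ∞) ∧ ∃ β : ℝ → ℝ, ContDiffOn ℝ (⊤ : ℕ∞) β (ball 0 ε) ∧ β 0 ≠ 0 ∧
        ∀ x₁ ∈ ball (0 : ℝ) ε, b0 x₁ = x₁ ^ n' * β x₁) ∨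
      (n = ⊤ ∧ ∀ j : ℕ, iteratedDeriv j b0 0 = 0))

/-- `ϕ` has a singularity of type `D_{n+1}` with parameters `(m, n)` -/
def DSing (ϕ : ℝ × ℝ → ℝ) (m : ℕ) (n : ℕ∞) : Prop :=
  2 ≤ m ∧ 3 ≤ n ∧ ∃ (L : (ℝ × ℝ) ≃ₗ[ℝ] ℝ × ℝ) (b : ℝ × ℝ → ℝ) (b0 ω : ℝ → ℝ) (ε : ℝ),
    DSingData ϕ m n L b b0 ω ε

/-- `ϕ` has a singularity of type `D_{n+1}` with parameters `(m, n)` and satisfies the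
`R`-condition: `b₀ ≡ 0` in the case `n = ∞`. -/
def DSingR (ϕ : ℝ × ℝ → ℝ) (m : ℕ) (n : ℕ∞) : Prop :=
  2 ≤ m ∧ 3 ≤ n ∧ ∃ (L : (ℝ × ℝ) ≃ₗ[ℝ] ℝ × ℝ) (b : ℝ × ℝ → ℝ) (b0 ω : ℝ → ℝ) (ε : ℝ),
    DSingData ϕ m n L b b0 ω ε ∧ (n = ⊤ → ∀ x₁ : ℝ, b0 x₁ = 0)

/-- the real value of `n ∈ ℕ∞`, with `∞ ↦ 0` (so that `c / enr ∞ = 0`, matching the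
convention that terms with `n` in the denominator are interpreted as `0` for `n = ∞`). -/
def enr (n : ℕ∞) : ℝ := (WithTop.untopD 0 n : ℕ)

/-! ### Convolution operators with oscillatory kernels -/

/-- Euclidean space `ℝ^N` -/
abbrev Ed (N : ℕ) : Type := EuclideanSpace ℝ (Fin N)

/-- an amplitude of order `-k`: smooth and homogeneous of degree `-k` for `‖ξ‖ ≥ 1` -/
def IsAmplitude {N : ℕ} (k : ℝ) (a : Ed N → ℂ) : Prop :=
  ContDiff ℝ (⊤ : ℕ∞) a ∧
    ∀ ξ : Ed N, 1 ≤ ‖ξ‖ → ∀ t : ℝ, 1 ≤ t → a (t • ξ) = ((t ^ (-k) : ℝ) : ℂ) * a ξ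

/-- the convolution operator `M_k u = F⁻¹(e^{iφ} a (F u))` on Schwartz functions -/
def Mop {N : ℕ} (φ : Ed N → ℝ) (a : Ed N → ℂ) (u : SchwartzMap (Ed N) ℂ) : Ed N → ℂ :=
  VectorFourier.fourierIntegral Real.fourierChar volume (-innerₗ (Ed N))
    (fun ξ => Complex.exp (Complex.I * (φ ξ : ℂ)) * a ξ *
      VectorFourier.fourierIntegral Real.fourierChar volume (innerₗ (Ed N)) (fun x => u x) ξ)

/-- the operator `M_k` (with phase `φ` and amplitude `a`) is `L^p → L^q` bounded -/
def IsLpBdd {N : ℕ} (φ : Ed N → ℝ) (a : Ed N → ℂ) (p q : ℝ≥0∞) : Prop :=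
  ∃ C : ℝ≥0, ∀ u : SchwartzMap (Ed N) ℂ,
    eLpNorm (Mop φ a u) q volume ≤ (C : ℝ≥0∞) * eLpNorm (fun x => u x) p volume

/-- `Γ` is a conic neighborhood of `v` (contained in `ℝ^N ∖ {0}`) -/
def IsConicNbhd {N : ℕ} (Γ : Set (Ed N)) (v : Ed N) : Prop :=
  IsOpen Γ ∧ v ∈ Γ ∧ (0 : Ed N) ∉ Γ ∧ ∀ ξ ∈ Γ, ∀ t : ℝ, 0 < t → t • ξ ∈ Γ

/-- the local exponent `k_p(v)`, for the pair of conjugate exponents `(p, q)` -/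
def kpLoc {N : ℕ} (φ : Ed N → ℝ) (v : Ed N) (p q : ℝ≥0∞) : ℝ :=
  sInf {k : ℝ | 0 < k ∧ ∃ Γ : Set (Ed N), IsConicNbhd Γ v ∧
    ∀ a : Ed N → ℂ, IsAmplitude k a → Function.support a ⊆ Γ → IsLpBdd φ a p q}

/-- the global exponent `k_p(Σ)`, for the pair of conjugate exponents `(p, q)` -/
def kpGlob {N : ℕ} (φ : Ed N → ℝ) (p q : ℝ≥0∞) : ℝ :=
  sInf {k : ℝ | 0 < k ∧ ∀ a : Ed N → ℂ, IsAmplitude k a → IsLpBdd φ a p q}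

/-- `φ` is smooth away from the origin, positive away from the origin, and positively
homogeneous of degree one -/
def PhiHyp {N : ℕ} (φ : Ed N → ℝ) : Prop :=
  ContDiffOn ℝ (⊤ : ℕ∞) φ {(0 : Ed N)}ᶜ ∧ (∀ ξ : Ed N, ξ ≠ 0 → 0 < φ ξ) ∧
    ∀ t : ℝ, 0 < t → ∀ ξ : Ed N, ξ ≠ 0 → φ (t • ξ) = t * φ ξ

/-- the point `v = (0, 0, 1) ∈ ℝ³` -/
def vpt : Ed 3 := (WithLp.equiv 2 (Fin 3 → ℝ)).symm ![0, 0, 1]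

/-- the point `(x₁, x₂, 1 + ϕ(x₁, x₂)) ∈ ℝ³` -/
def graphPt (ϕ : ℝ × ℝ → ℝ) (x : ℝ × ℝ) : Ed 3 :=
  (WithLp.equiv 2 (Fin 3 → ℝ)).symm ![x.1, x.2, 1 + ϕ x]

/-- near `v = (0,0,1)`, the surface `Σ = {φ = 1}` is the graph of `1 + ϕ` over a
neighborhood `U` of the origin, where `ϕ` is smooth with `ϕ(0,0) = 0`, `∇ϕ(0,0) = 0` -/
def GraphAt (φ : Ed 3 → ℝ) (ϕ : ℝ × ℝ → ℝ) : Prop :=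
  ∃ U ∈ 𝓝 (0 : ℝ × ℝ), ContDiffOn ℝ (⊤ : ℕ∞) ϕ U ∧ ϕ 0 = 0 ∧ fderiv ℝ ϕ 0 = 0 ∧
    ∃ W : Set (Ed 3), IsOpen W ∧ vpt ∈ W ∧ {ξ ∈ W | φ ξ = 1} = graphPt ϕ '' U

/-- the height `h(Σ)` of the surface `Σ = {φ = 1}`: the supremum over points `v ∈ Σ` of the
heights of graph functions of `Σ` at `v`, obtained after a linear change of variables of `ℝ³`
moving `v` to `(0,0,1)` -/
def hSurf (φ : Ed 3 → ℝ) : ℝ :=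
  sSup {h : ℝ | ∃ v : Ed 3, φ v = 1 ∧ ∃ A : Ed 3 ≃ₗ[ℝ] Ed 3, A v = vpt ∧
    ∃ ϕ : ℝ × ℝ → ℝ, GraphAt (φ ∘ A.symm) ϕ ∧ h = height ϕ}

/-- the point `(x, 1 + ϕ(x)) ∈ ℝ^{d+1}` for `x ∈ ℝ^d` -/
def graphPtN {d : ℕ} (ϕ : Ed d → ℝ) (x : Ed d) : Ed (d + 1) :=
  (WithLp.equiv 2 (Fin (d + 1) → ℝ)).symm
    (Fin.snoc ((WithLp.equiv 2 (Fin d → ℝ)) x) (1 + ϕ x))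

/-- the point `v = (0, …, 0, 1) ∈ ℝ^{d+1}` -/
def vptN (d : ℕ) : Ed (d + 1) :=
  (WithLp.equiv 2 (Fin (d + 1) → ℝ)).symm (Fin.snoc (fun _ : Fin d => (0 : ℝ)) 1)

/-- the oscillatory integral `I(λ, s) = ∫ e^{iλ(ϕ(x) + s·x)} g(x) dx` over `ℝ^d` -/
def oscI {d : ℕ} (ϕ : Ed d → ℝ) (g : Ed d → ℂ) (l : ℝ) (s : Ed d) : ℂ :=
  ∫ x : Ed d, Complex.exp (Complex.I * ((l * (ϕ x + ⟪s, x⟫) : ℝ) : ℂ)) * g x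

/-- the oscillatory integral `I(λ, s)` in two dimensions, with `ℝ²` realised as `ℝ × ℝ` -/
def oscI2 (ϕ : ℝ × ℝ → ℝ) (g : ℝ × ℝ → ℂ) (l : ℝ) (s : ℝ × ℝ) : ℂ :=
  ∫ x : ℝ × ℝ, Complex.exp (Complex.I * ((l * (ϕ x + s.1 * x.1 + s.2 * x.2) : ℝ) : ℂ)) * g x


/-
The Newton distance of `ϕ ∘ y` is bounded by the order to which `ϕ ∘ y` vanishes at the origin,
and that order does not depend on the smooth coordinate change `y`: by the chain and Leibniz
rules, functions vanishing to order `k` are stable under sums, products with smooth functions and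
composition with smooth maps fixing `0`, and `y` has a smooth inverse. Hence the Newton distances
defining `h(ϕ)` are bounded, so that `d(ϕ) ≤ h_lin(ϕ) ≤ h(ϕ)` (an unbounded `sSup` would be `0`).
If `ϕ` is flat all these distances vanish. Otherwise the Taylor support of `ϕ` lies in
`α₁ + α₂ ≥ 4`, so `d(ϕ) ≥ 2 ≥ h(ϕ)`.
-/

open scoped ContDiff

/-- Stated pointwise because `ContDiffAt ℝ ∞ f 0` alone does not make `f` smooth near `0`. -/
def SmoothNearOrigin {E : Type*} [NormedAddCommGroup E] [NormedSpace ℝ E] (f : ℝ × ℝ → E) :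
    Prop :=
  ∀ᶠ x in 𝓝 0, ContDiffAt ℝ ∞ f x

namespace SmoothNearOrigin

variable {E : Type*} [NormedAddCommGroup E] [NormedSpace ℝ E]

theorem of_contDiffOn {f : ℝ × ℝ → E} {U : Set (ℝ × ℝ)} (hU : U ∈ 𝓝 0)
    (hf : ContDiffOn ℝ ∞ f U) : SmoothNearOrigin f :=
  (eventually_eventually_nhds.2 hU).mono fun _ hx => hf.contDiffAt hx

theorem fderiv_apply {f : ℝ × ℝ → E} (hf : SmoothNearOrigin f) (v : ℝ × ℝ) :
    SmoothNearOrigin fun x => fderiv ℝ f x v :=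
  hf.mono fun _ hx => (hx.fderiv_right le_rfl).clm_apply contDiffAt_const

theorem eventually_contDiffAt_comp {f : ℝ × ℝ → E} {g : ℝ × ℝ → ℝ × ℝ}
    (hf : SmoothNearOrigin f) (hg : SmoothNearOrigin g) (hg0 : g 0 = 0) :
    ∀ᶠ x in 𝓝 0, ContDiffAt ℝ ∞ f (g x) := by
  have hgt : Tendsto g (𝓝 0) (𝓝 0) := by
    simpa [hg0] using hg.self_of_nhds.continuousAt.tendsto
  exact hgt.eventually hf

theorem comp {f : ℝ × ℝ → E} {g : ℝ × ℝ → ℝ × ℝ} (hf : SmoothNearOrigin f)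
    (hg : SmoothNearOrigin g) (hg0 : g 0 = 0) : SmoothNearOrigin (f ∘ g) := by
  filter_upwards [hg, hf.eventually_contDiffAt_comp hg hg0] with x hgx hfx
  exact hfx.comp x hgx

theorem fst {F : Type*} [NormedAddCommGroup F] [NormedSpace ℝ F] {f : ℝ × ℝ → E × F}
    (hf : SmoothNearOrigin f) : SmoothNearOrigin fun x => (f x).1 :=
  hf.mono fun _ hx => hx.fst

theorem snd {F : Type*} [NormedAddCommGroup F] [NormedSpace ℝ F] {f : ℝ × ℝ → E × F}
    (hf : SmoothNearOrigin f) : SmoothNearOrigin fun x => (f x).2 :=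
  hf.mono fun _ hx => hx.snd

variable {f g : ℝ × ℝ → ℝ}

theorem pd1 (hf : SmoothNearOrigin f) : SmoothNearOrigin (pd1 f) := hf.fderiv_apply _

theorem pd2 (hf : SmoothNearOrigin f) : SmoothNearOrigin (pd2 f) := hf.fderiv_apply _

theorem add (hf : SmoothNearOrigin f) (hg : SmoothNearOrigin g) : SmoothNearOrigin (f + g) :=
  hf.and hg |>.mono fun _ h => h.1.add h.2

theorem mul (hf : SmoothNearOrigin f) (hg : SmoothNearOrigin g) : SmoothNearOrigin (f * g) :=
  hf.and hg |>.mono fun _ h => h.1.mul h.2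

theorem iterate_pd2 (hf : SmoothNearOrigin f) (n : ℕ) : SmoothNearOrigin (_root_.pd2^[n] f) := by
  induction n with
  | zero => exact hf
  | succ n ih => rw [Function.iterate_succ_apply']; exact ih.pd2

end SmoothNearOrigin

section Partials

variable {f g : ℝ × ℝ → ℝ}

theorem fderiv_apply_eq_pd (f : ℝ × ℝ → ℝ) (x w : ℝ × ℝ) :
    fderiv ℝ f x w = w.1 * pd1 f x + w.2 * pd2 f x := by
  have hw : w = w.1 • ((1 : ℝ), (0 : ℝ)) + w.2 • ((0 : ℝ), (1 : ℝ)) := by simp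
  conv_lhs => rw [hw, map_add, map_smul, map_smul]
  rfl

theorem Filter.EventuallyEq.fderiv_apply {E F : Type*} [NormedAddCommGroup E] [NormedSpace ℝ E]
    [NormedAddCommGroup F] [NormedSpace ℝ F] {f g : E → F} {x : E} (h : f =ᶠ[𝓝 x] g) (v : E) :
    (fun y => fderiv ℝ f y v) =ᶠ[𝓝 x] fun y => fderiv ℝ g y v :=
  (h.fderiv (𝕜 := ℝ)).mono fun _ hy => by simp only [hy]

theorem Filter.EventuallyEq.iterate_pd1 {x : ℝ × ℝ} (h : f =ᶠ[𝓝 x] g) (n : ℕ) :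
    pd1^[n] f =ᶠ[𝓝 x] pd1^[n] g := by
  induction n with
  | zero => exact h
  | succ n ih =>
    rw [Function.iterate_succ_apply', Function.iterate_succ_apply']
    exact ih.fderiv_apply (1, 0)

theorem Filter.EventuallyEq.pD {x : ℝ × ℝ} (h : f =ᶠ[𝓝 x] g) (α : ℕ × ℕ) :
    pD α f =ᶠ[𝓝 x] pD α g := by
  have h2 : pd2^[α.2] f =ᶠ[𝓝 x] pd2^[α.2] g := by
    induction α.2 with
    | zero => exact h
    | succ n ih =>
      rw [Function.iterate_succ_apply', Function.iterate_succ_apply']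
      exact ih.fderiv_apply (0, 1)
  exact h2.iterate_pd1 α.1

theorem pd1_pd2_eq_pd2_pd1 {x : ℝ × ℝ} (hf : ContDiffAt ℝ ∞ f x) :
    pd1 (pd2 f) x = pd2 (pd1 f) x := by
  have hd : DifferentiableAt ℝ (fderiv ℝ f) x :=
    (hf.fderiv_right (m := ∞) le_rfl).differentiableAt (by simp)
  have h2 : minSmoothness ℝ 2 ≤ (∞ : ℕ∞ω) := by
    rw [minSmoothness_of_isRCLikeNormedField]; exact ENat.LEInfty.out
  change fderiv ℝ (fun y => fderiv ℝ f y (0, 1)) x (1, 0) =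
    fderiv ℝ (fun y => fderiv ℝ f y (1, 0)) x (0, 1)
  rw [fderiv_clm_apply hd (differentiableAt_const _),
    fderiv_clm_apply hd (differentiableAt_const _)]
  simpa using hf.isSymmSndFDerivAt h2 (1, 0) (0, 1)

theorem pD_pd1 (hf : SmoothNearOrigin f) (α : ℕ × ℕ) :
    pD α (pd1 f) 0 = pD (α.1 + 1, α.2) f 0 := by
  have hcomm : ∀ b, pd2^[b] (pd1 f) =ᶠ[𝓝 0] pd1 (pd2^[b] f) := by
    intro b
    induction b with
    | zero => rfl
    | succ b ih =>
      calc pd2^[b + 1] (pd1 f) = pd2 (pd2^[b] (pd1 f)) := Function.iterate_succ_apply' _ _ _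
        _ =ᶠ[𝓝 0] pd2 (pd1 (pd2^[b] f)) := ih.fderiv_apply (0, 1)
        _ =ᶠ[𝓝 0] pd1 (pd2 (pd2^[b] f)) :=
          (hf.iterate_pd2 b).mono fun _ hx => (pd1_pd2_eq_pd2_pd1 hx).symm
        _ = pd1 (pd2^[b + 1] f) := by rw [Function.iterate_succ_apply']
  exact ((hcomm α.2).iterate_pd1 α.1).self_of_nhds

theorem eventuallyEq_fderiv_add_apply (hf : SmoothNearOrigin f) (hg : SmoothNearOrigin g)
    (v : ℝ × ℝ) :
    (fun x => fderiv ℝ (f + g) x v) =ᶠ[𝓝 0] (fun x => fderiv ℝ f x v) + fun x => fderiv ℝ g x v :=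
  (Filter.Eventually.and hf hg).mono fun x h => by
    simp [fderiv_add (h.1.differentiableAt (by simp)) (h.2.differentiableAt (by simp))]

theorem eventuallyEq_fderiv_mul_apply (hf : SmoothNearOrigin f) (hg : SmoothNearOrigin g)
    (v : ℝ × ℝ) :
    (fun x => fderiv ℝ (f * g) x v) =ᶠ[𝓝 0]
      (fun x => fderiv ℝ f x v) * g + f * fun x => fderiv ℝ g x v :=
  (Filter.Eventually.and hf hg).mono fun x h => by
    simp [fderiv_mul (h.1.differentiableAt (by simp)) (h.2.differentiableAt (by simp))]
    ring

theorem eventuallyEq_fderiv_comp_apply {g : ℝ × ℝ → ℝ × ℝ} (hf : SmoothNearOrigin f)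
    (hg : SmoothNearOrigin g) (hg0 : g 0 = 0) (v : ℝ × ℝ) :
    (fun x => fderiv ℝ (f ∘ g) x v) =ᶠ[𝓝 0]
      (pd1 f ∘ g) * (fun x => (fderiv ℝ g x v).1) + (pd2 f ∘ g) * fun x => (fderiv ℝ g x v).2 := by
  filter_upwards [hg, hf.eventually_contDiffAt_comp hg hg0] with x hgx hfx
  rw [fderiv_comp x (hfx.differentiableAt (by simp)) (hgx.differentiableAt (by simp)),
    ContinuousLinearMap.comp_apply, fderiv_apply_eq_pd]
  simp only [Pi.add_apply, Pi.mul_apply, Function.comp_apply]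
  ring

end Partials

def VanishesToOrder (k : ℕ) (f : ℝ × ℝ → ℝ) : Prop :=
  ∀ α : ℕ × ℕ, α.1 + α.2 < k → pD α f 0 = 0

namespace VanishesToOrder

variable {f g : ℝ × ℝ → ℝ} {k : ℕ}

theorem zero (f : ℝ × ℝ → ℝ) : VanishesToOrder 0 f := fun _ h => absurd h (Nat.not_lt_zero _)

theorem mono {j : ℕ} (h : VanishesToOrder k f) (hjk : j ≤ k) : VanishesToOrder j f :=
  fun α hα => h α (hα.trans_le hjk)

theorem congr (h : VanishesToOrder k f) (hfg : f =ᶠ[𝓝 0] g) : VanishesToOrder k g :=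
  fun α hα => (hfg.pD α).self_of_nhds ▸ h α hα

theorem _root_.vanishesToOrder_succ_iff (hf : SmoothNearOrigin f) :
    VanishesToOrder (k + 1) f ↔
      f 0 = 0 ∧ VanishesToOrder k (pd1 f) ∧ VanishesToOrder k (pd2 f) := by
  constructor
  · intro h
    refine ⟨h 0 (by simp), fun α hα => ?_, fun α hα => h (α.1, α.2 + 1) (by simp; omega)⟩
    rw [pD_pd1 hf]
    exact h _ (by simp; omega)
  · rintro ⟨h0, h1, h2⟩ ⟨a, b⟩ hab
    rcases b with _ | b
    · rcases a with _ | a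
      · exact h0
      · exact h1 (a, 0) (by simp at hab ⊢; omega)
    · exact h2 (a, b) (by simp at hab ⊢; omega)

theorem add (hf : SmoothNearOrigin f) (hg : SmoothNearOrigin g) (hfk : VanishesToOrder k f)
    (hgk : VanishesToOrder k g) : VanishesToOrder k (f + g) := by
  induction k generalizing f g with
  | zero => exact zero _
  | succ k ih =>
    obtain ⟨hf0, hf1, hf2⟩ := (vanishesToOrder_succ_iff hf).1 hfk
    obtain ⟨hg0, hg1, hg2⟩ := (vanishesToOrder_succ_iff hg).1 hgk
    refine (vanishesToOrder_succ_iff (hf.add hg)).2 ⟨by simp [hf0, hg0], ?_, ?_⟩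
    · exact (ih hf.pd1 hg.pd1 hf1 hg1).congr (eventuallyEq_fderiv_add_apply hf hg _).symm
    · exact (ih hf.pd2 hg.pd2 hf2 hg2).congr (eventuallyEq_fderiv_add_apply hf hg _).symm

theorem mul (hf : SmoothNearOrigin f) (hg : SmoothNearOrigin g) (hfk : VanishesToOrder k f) :
    VanishesToOrder k (f * g) := by
  induction k generalizing f g with
  | zero => exact zero _
  | succ k ih =>
    obtain ⟨hf0, hf1, hf2⟩ := (vanishesToOrder_succ_iff hf).1 hfk
    have hfk' := hfk.mono k.le_succ
    refine (vanishesToOrder_succ_iff (hf.mul hg)).2 ⟨by simp [hf0], ?_, ?_⟩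
    · exact ((ih hf.pd1 hg hf1).add (hf.pd1.mul hg) (hf.mul hg.pd1) (ih hf hg.pd1 hfk')).congr
        (eventuallyEq_fderiv_mul_apply hf hg _).symm
    · exact ((ih hf.pd2 hg hf2).add (hf.pd2.mul hg) (hf.mul hg.pd2) (ih hf hg.pd2 hfk')).congr
        (eventuallyEq_fderiv_mul_apply hf hg _).symm

theorem comp {g : ℝ × ℝ → ℝ × ℝ} (hf : SmoothNearOrigin f) (hg : SmoothNearOrigin g)
    (hg0 : g 0 = 0) (hfk : VanishesToOrder k f) : VanishesToOrder k (f ∘ g) := by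
  induction k generalizing f with
  | zero => exact zero _
  | succ k ih =>
    obtain ⟨hf0, hf1, hf2⟩ := (vanishesToOrder_succ_iff hf).1 hfk
    have hstep : ∀ v, VanishesToOrder k fun x => fderiv ℝ (f ∘ g) x v := fun v =>
      (((ih hf.pd1 hf1).mul (hf.pd1.comp hg hg0) (hg.fderiv_apply v).fst).add
        ((hf.pd1.comp hg hg0).mul (hg.fderiv_apply v).fst)
        ((hf.pd2.comp hg hg0).mul (hg.fderiv_apply v).snd)
        ((ih hf.pd2 hf2).mul (hf.pd2.comp hg hg0) (hg.fderiv_apply v).snd)).congr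
        (eventuallyEq_fderiv_comp_apply hf hg hg0 v).symm
    exact (vanishesToOrder_succ_iff (hf.comp hg hg0)).2 ⟨by simp [hg0, hf0], hstep _, hstep _⟩

end VanishesToOrder

theorem IsLocalCoordChange.vanishesToOrder_comp_iff {y : ℝ × ℝ → ℝ × ℝ} {f : ℝ × ℝ → ℝ} {k : ℕ}
    (hy : IsLocalCoordChange y) (hf : SmoothNearOrigin f) :
    VanishesToOrder k (f ∘ y) ↔ VanishesToOrder k f := by
  obtain ⟨hy0, U, V, hU, hV, hU0, hV0, hyU, -, z, hzV, -, hzy, hyz⟩ := hy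
  have hysm : SmoothNearOrigin y := .of_contDiffOn (hU.mem_nhds hU0) hyU
  have hzsm : SmoothNearOrigin z := .of_contDiffOn (hV.mem_nhds hV0) hzV
  have hz0 : z 0 = 0 := by simpa [hy0] using hzy 0 hU0
  refine ⟨fun h => (h.comp (hf.comp hysm hy0) hzsm hz0).congr ?_, fun h => h.comp hf hysm hy0⟩
  filter_upwards [hV.mem_nhds hV0] with x hx
  simp [hyz x hx]

theorem LinearEquiv.isLocalCoordChange (L : (ℝ × ℝ) ≃ₗ[ℝ] ℝ × ℝ) : IsLocalCoordChange L :=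
  ⟨map_zero L, univ, univ, isOpen_univ, isOpen_univ, mem_univ 0, mem_univ 0,
    L.toContinuousLinearEquiv.contDiff.contDiffOn, mapsTo_univ _ _, L.symm,
    L.symm.toContinuousLinearEquiv.contDiff.contDiffOn, mapsTo_univ _ _,
    fun x _ => L.symm_apply_apply x, fun x _ => L.apply_symm_apply x⟩

section NewtonDistance

variable {f : ℝ × ℝ → ℝ}

theorem max_mem_newtonDistSet {α : ℕ × ℕ} (hα : α ∈ taylorSupport f) :
    ((max α.1 α.2 : ℕ) : ℝ) ∈ {t : ℝ | 0 < t ∧ (t, t) ∈ newtonPolygon f} := by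
  have hpos : 0 < max α.1 α.2 := by
    have := hα.1
    rw [Ne, Prod.ext_iff] at this
    simp only [Prod.fst_zero, Prod.snd_zero] at this
    omega
  exact ⟨by exact_mod_cast hpos, subset_convexHull ℝ _ (mem_iUnion₂.2 ⟨α, hα, by simp, by simp⟩)⟩

theorem newtonDist_le_of_mem_taylorSupport {α : ℕ × ℕ} (hα : α ∈ taylorSupport f) :
    newtonDist f ≤ (max α.1 α.2 : ℕ) :=
  csInf_le ⟨0, fun _ ht => ht.1.le⟩ (max_mem_newtonDistSet hα)

theorem newtonDist_eq_zero_of_taylorSupport_eq_empty (h : taylorSupport f = ∅) :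
    newtonDist f = 0 := by
  have : {t : ℝ | 0 < t ∧ (t, t) ∈ newtonPolygon f} = ∅ := by
    simp [newtonPolygon, h]
  rw [newtonDist, this, Real.sInf_empty]

theorem div_two_le_newtonDist {n : ℕ} (hne : (taylorSupport f).Nonempty)
    (h : ∀ α ∈ taylorSupport f, n ≤ α.1 + α.2) : (n : ℝ) / 2 ≤ newtonDist f := by
  obtain ⟨α, hα⟩ := hne
  have hhalf : newtonPolygon f ⊆ {s : ℝ × ℝ | (n : ℝ) ≤ s.1 + s.2} := by
    refine convexHull_min ?_
      (convex_halfSpace_ge (LinearMap.fst ℝ ℝ ℝ + LinearMap.snd ℝ ℝ ℝ).isLinear _)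
    intro s hs
    obtain ⟨β, hβ, hs1, hs2⟩ := mem_iUnion₂.1 hs
    have : (n : ℝ) ≤ β.1 + β.2 := by exact_mod_cast h β hβ
    simp only [mem_ofPred_eq]
    linarith
  refine le_csInf ⟨_, max_mem_newtonDistSet hα⟩ fun t ht => ?_
  have := hhalf ht.2
  simp only [mem_ofPred_eq] at this
  linarith

theorem exists_mem_taylorSupport_of_not_vanishesToOrder {k : ℕ} (h0 : f 0 = 0)
    (hk : ¬VanishesToOrder k f) : ∃ α ∈ taylorSupport f, α.1 + α.2 < k := by
  obtain ⟨α, hαk, hα⟩ : ∃ α : ℕ × ℕ, α.1 + α.2 < k ∧ pD α f 0 ≠ 0 := by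
    simpa [VanishesToOrder] using hk
  refine ⟨α, ⟨?_, hα⟩, hαk⟩
  rintro rfl
  exact hα h0

theorem newtonDist_le_of_not_vanishesToOrder {k : ℕ} (h0 : f 0 = 0)
    (hk : ¬VanishesToOrder k f) : newtonDist f ≤ k := by
  obtain ⟨α, hα, hαk⟩ := exists_mem_taylorSupport_of_not_vanishesToOrder h0 hk
  calc newtonDist f ≤ (max α.1 α.2 : ℕ) := newtonDist_le_of_mem_taylorSupport hα
    _ ≤ k := by exact_mod_cast (max_le_add_of_nonneg (Nat.zero_le _) (Nat.zero_le _)).trans hαk.le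

theorem newtonDist_eq_zero_of_forall_vanishesToOrder (h : ∀ k, VanishesToOrder k f) :
    newtonDist f = 0 :=
  newtonDist_eq_zero_of_taylorSupport_eq_empty <|
    eq_empty_of_forall_notMem fun α hα => hα.2 (h (α.1 + α.2 + 1) α (Nat.lt_succ_self _))

theorem div_two_le_newtonDist_of_vanishesToOrder {k : ℕ} (h0 : f 0 = 0) (hk : VanishesToOrder k f)
    (hflat : ¬∀ j, VanishesToOrder j f) : (k : ℝ) / 2 ≤ newtonDist f := by
  obtain ⟨j, hj⟩ := not_forall.1 hflat
  obtain ⟨α, hα, -⟩ := exists_mem_taylorSupport_of_not_vanishesToOrder h0 hj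
  exact div_two_le_newtonDist ⟨α, hα⟩ fun β hβ => not_lt.1 fun hlt => hβ.2 (hk β hlt)

end NewtonDistance

section Height

variable {f : ℝ × ℝ → ℝ}

theorem IsLocalCoordChange.newtonDist_comp_eq_zero {y : ℝ × ℝ → ℝ × ℝ}
    (hy : IsLocalCoordChange y) (hf : SmoothNearOrigin f) (hflat : ∀ k, VanishesToOrder k f) :
    newtonDist (f ∘ y) = 0 :=
  newtonDist_eq_zero_of_forall_vanishesToOrder fun k => (hy.vanishesToOrder_comp_iff hf).2 (hflat k)

theorem bddAbove_newtonDist_comp (hf : SmoothNearOrigin f) (h0 : f 0 = 0) :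
    BddAbove {d : ℝ | ∃ y, IsLocalCoordChange y ∧ d = newtonDist (f ∘ y)} := by
  by_cases hflat : ∀ k, VanishesToOrder k f
  · refine ⟨0, ?_⟩
    rintro _ ⟨y, hy, rfl⟩
    exact (hy.newtonDist_comp_eq_zero hf hflat).le
  · obtain ⟨k, hk⟩ := not_forall.1 hflat
    refine ⟨k, ?_⟩
    rintro _ ⟨y, hy, rfl⟩
    exact newtonDist_le_of_not_vanishesToOrder (by simp [hy.1, h0])
      (mt (hy.vanishesToOrder_comp_iff hf).1 hk)

theorem setOf_newtonDist_comp_linearEquiv_subset :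
    {d : ℝ | ∃ L : (ℝ × ℝ) ≃ₗ[ℝ] ℝ × ℝ, d = newtonDist (f ∘ L)} ⊆
      {d : ℝ | ∃ y, IsLocalCoordChange y ∧ d = newtonDist (f ∘ y)} :=
  fun _ ⟨L, hL⟩ => ⟨L, L.isLocalCoordChange, hL⟩

theorem linHeight_le_height
    (hbdd : BddAbove {d : ℝ | ∃ y, IsLocalCoordChange y ∧ d = newtonDist (f ∘ y)}) :
    linHeight f ≤ height f :=
  csSup_le_csSup hbdd ⟨_, LinearEquiv.refl ℝ _, rfl⟩ setOf_newtonDist_comp_linearEquiv_subset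

theorem newtonDist_le_linHeight
    (hbdd : BddAbove {d : ℝ | ∃ y, IsLocalCoordChange y ∧ d = newtonDist (f ∘ y)}) :
    newtonDist f ≤ linHeight f :=
  le_csSup (hbdd.mono setOf_newtonDist_comp_linearEquiv_subset) ⟨LinearEquiv.refl ℝ _, rfl⟩

theorem height_eq_zero_of_forall_vanishesToOrder (hf : SmoothNearOrigin f)
    (hflat : ∀ k, VanishesToOrder k f) : height f = 0 := by
  have hzero : {d : ℝ | ∃ y, IsLocalCoordChange y ∧ d = newtonDist (f ∘ y)} = {0} := by
    refine eq_singleton_iff_unique_mem.2 ⟨⟨_, (LinearEquiv.refl ℝ _).isLocalCoordChange, ?_⟩, ?_⟩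
    · exact (newtonDist_eq_zero_of_forall_vanishesToOrder hflat).symm
    · rintro _ ⟨y, hy, rfl⟩
      exact hy.newtonDist_comp_eq_zero hf hflat
  rw [height, hzero, csSup_singleton]

end Height

/-- if all derivatives of `ϕ` of order `≤ 3` vanish at `0` (i.e. `ϕ₂ ≡ 0` and
`ϕ₃ ≡ 0`) and `h(ϕ) ≤ 2`, then `h_lin(ϕ) = h(ϕ)`, i.e. the coordinate system is linearly
adapted to `ϕ`. -/
theorem stmt17 (ϕ : ℝ × ℝ → ℝ) (hsm : ∃ U ∈ 𝓝 (0 : ℝ × ℝ), ContDiffOn ℝ (⊤ : ℕ∞) ϕ U)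
    (hrank : ∀ α : ℕ × ℕ, α.1 + α.2 ≤ 3 → pD α ϕ 0 = 0)
    (hht : height ϕ ≤ 2) :
    linHeight ϕ = height ϕ := by
  obtain ⟨U, hU, hϕU⟩ := hsm
  have hϕ : SmoothNearOrigin ϕ := .of_contDiffOn hU hϕU
  have hϕ4 : VanishesToOrder 4 ϕ := fun α hα => hrank α (by omega)
  have hϕ0 : ϕ 0 = 0 := hϕ4 0 (by simp)
  have hbdd := bddAbove_newtonDist_comp hϕ hϕ0
  have hlin := linHeight_le_height hbdd
  have hdist := newtonDist_le_linHeight hbdd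
  by_cases hflat : ∀ k, VanishesToOrder k ϕ
  · rw [height_eq_zero_of_forall_vanishesToOrder hϕ hflat] at hlin ⊢
    rw [newtonDist_eq_zero_of_forall_vanishesToOrder hflat] at hdist
    linarith
  · have h2 := div_two_le_newtonDist_of_vanishesToOrder hϕ0 hϕ4 hflat
    norm_num at h2
    linarith
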